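/- Let F^λ[G] be a twisted group algebra of characteristic p > 0 such that either F^λ[G]^[m] = 0 or F^λ[G]^(m) = 0 for some m, and let p^t ≥ m. If a ∈ G is a p-element and c ∈ G is a q-element for a prime q ≠ p, then a and c commute in G and λ(a,c) = λ(c,a). -/

import Mathlib

/-!
In characteristic `p`, `(ad y)^(p^t) = ad (y^(p^t))`, and `(ad y)^(p^t) x` lies in
`γ_{p^t+1}(A) ⊆ γ_m(A) = 0`; so every `p^t`-th power in `A` is central. As `p^t` is prime to the
order of the `q`-element `c`, we have `c = b^(p^t)` for some `b ∈ ⟨c⟩`, and `(B b)^(p^t)` is a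
nonzero multiple of `B c`. Hence `B c` is central, and comparing coefficients in
`B a * B c = B c * B a`, i.e. `λ(a,c) B(ac) = λ(c,a) B(ca)`, gives both claims.
-/

/-- Additive subgroup generated by products `s * t` with `s ∈ S`, `t ∈ T`. -/
def aprod {R : Type*} [NonUnitalRing R] (S T : AddSubgroup R) : AddSubgroup R :=
  AddSubgroup.closure {x : R | ∃ s ∈ S, ∃ t ∈ T, x = s * t}

/-- Additive subgroup generated by Lie commutators `s*t - t*s`. -/
def lbrk {R : Type*} [NonUnitalRing R] (S T : AddSubgroup R) : AddSubgroup R :=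
  AddSubgroup.closure {x : R | ∃ s ∈ S, ∃ t ∈ T, x = s * t - t * s}

/-- The lower Lie central series `γ₁(R) = R`, `γₙ(R) = [γₙ₋₁(R), R]`. -/
def lieGamma (R : Type*) [NonUnitalRing R] : ℕ → AddSubgroup R
  | 0 => ⊤
  | 1 => ⊤
  | n + 2 => lbrk (lieGamma R (n + 1)) ⊤

/-- The `n`-th lower Lie power `R^[n] = γₙ(R)·R`. -/
def lowerLiePow (R : Type*) [NonUnitalRing R] (n : ℕ) : AddSubgroup R :=
  aprod (lieGamma R n) ⊤

/-- The `n`-th upper Lie power: `R^(1) = R`, `R^(n) = [R^(n-1), R]·R`. -/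
def upperLiePow (R : Type*) [NonUnitalRing R] : ℕ → AddSubgroup R
  | 0 => ⊤
  | 1 => ⊤
  | n + 2 => aprod (lbrk (upperLiePow R (n + 1)) ⊤) ⊤

section LiePowers

variable {R : Type*}

lemma lbrk_mono [NonUnitalRing R] {S S' T : AddSubgroup R} (h : S ≤ S') :
    lbrk S T ≤ lbrk S' T := by
  apply AddSubgroup.closure_mono
  rintro x ⟨u, hu, v, hv, rfl⟩
  exact ⟨u, h hu, v, hv, rfl⟩

lemma le_aprod_top [Ring R] (S : AddSubgroup R) : S ≤ aprod S ⊤ :=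
  fun x hx => AddSubgroup.subset_closure ⟨x, hx, 1, trivial, (mul_one x).symm⟩

lemma lieGamma_succ_le [NonUnitalRing R] : ∀ n, lieGamma R (n + 1) ≤ lieGamma R n
  | 0 => le_rfl
  | 1 => le_top
  | n + 2 => lbrk_mono (lieGamma_succ_le (n + 1))

lemma lieGamma_antitone [NonUnitalRing R] : Antitone (lieGamma R) :=
  antitone_nat_of_succ_le lieGamma_succ_le

lemma lieGamma_le_upperLiePow [Ring R] : ∀ n, lieGamma R n ≤ upperLiePow R n
  | 0 => le_rfl
  | 1 => le_rfl
  | n + 2 => (lbrk_mono (lieGamma_le_upperLiePow (n + 1))).trans (le_aprod_top _)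

lemma lieGamma_eq_bot_of_lowerLiePow_or_upperLiePow [Ring R] {m : ℕ}
    (h : lowerLiePow R m = ⊥ ∨ upperLiePow R m = ⊥) : lieGamma R m = ⊥ := by
  rcases h with h | h
  · exact le_bot_iff.mp (h ▸ le_aprod_top _)
  · exact le_bot_iff.mp (h ▸ lieGamma_le_upperLiePow m)

end LiePowers

section AdPowers

variable (F : Type*) {A : Type*} [Field F] [Ring A] [Algebra F A]

abbrev adEnd (y : A) : Module.End F A :=
  LinearMap.mulLeft F y - LinearMap.mulRight F y

lemma adEnd_pow_mem_lieGamma (y : A) : ∀ (n : ℕ) (x : A), (adEnd F y ^ n) x ∈ lieGamma A (n + 1)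
  | 0, x => by simp [lieGamma]
  | n + 1, x => by
    set z := (adEnd F y ^ n) x
    have hz : z ∈ lieGamma A (n + 1) := adEnd_pow_mem_lieGamma y n x
    have hneg : (adEnd F y ^ (n + 1)) x = -(z * y - y * z) := by
      rw [pow_succ', Module.End.mul_apply]
      simp [z]
    rw [hneg]
    exact neg_mem (AddSubgroup.subset_closure ⟨z, hz, y, trivial, rfl⟩)

lemma adEnd_pow_char_pow (p : ℕ) [Fact p.Prime] [CharP F p] [Nontrivial A] (t : ℕ) (y : A) :
    adEnd F y ^ p ^ t = adEnd F (y ^ p ^ t) := by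
  have : CharP (Module.End F A) p := charP_of_injective_algebraMap' F p
  rw [sub_pow_char_pow_of_commute p t (LinearMap.commute_mulLeft_right y y),
    LinearMap.pow_mulLeft, LinearMap.pow_mulRight]

lemma commute_pow_char_pow_of_lieGamma_eq_bot (p : ℕ) [Fact p.Prime] [CharP F p] [Nontrivial A]
    {m t : ℕ} (hm : lieGamma A m = ⊥) (hmt : m ≤ p ^ t) (y x : A) :
    Commute (y ^ p ^ t) x := by
  have hmem : (adEnd F y ^ p ^ t) x ∈ lieGamma A m :=
    lieGamma_antitone (hmt.trans (Nat.le_succ _)) (adEnd_pow_mem_lieGamma F y _ x)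
  rw [hm, AddSubgroup.mem_bot, adEnd_pow_char_pow F p t y] at hmem
  exact sub_eq_zero.mp hmem

end AdPowers

section TwistedGroupAlgebra

variable {F G A : Type*} [Field F] [Ring A] [Algebra F A] {B : Module.Basis G F A}

lemma Module.Basis.eq_of_smul_eq_smul {u v : F} (hu : u ≠ 0) {g h : G}
    (huv : u • B g = v • B h) : g = h ∧ u = v := by
  have hrepr := congrArg B.repr huv
  rw [map_smul, map_smul, B.repr_self, B.repr_self, Finsupp.smul_single_one,
    Finsupp.smul_single_one, Finsupp.single_eq_single_iff] at hrepr
  exact hrepr.resolve_right fun h0 => hu h0.1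

variable [Group G] {l : G → G → Fˣ}

lemma exists_basis_pow_eq_smul (hone : B 1 = 1)
    (hmul : ∀ g h : G, B g * B h = (l g h : F) • B (g * h)) (g : G) (n : ℕ) :
    ∃ u : Fˣ, B g ^ n = (u : F) • B (g ^ n) := by
  induction n with
  | zero => exact ⟨1, by simp [hone]⟩
  | succ n ih =>
    obtain ⟨u, hu⟩ := ih
    refine ⟨u * l (g ^ n) g, ?_⟩
    rw [pow_succ, hu, smul_mul_assoc, hmul, smul_smul, pow_succ, Units.val_mul]

lemma mul_comm_and_eq_of_commute_basis
    (hmul : ∀ g h : G, B g * B h = (l g h : F) • B (g * h)) {a c : G}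
    (h : Commute (B a) (B c)) : a * c = c * a ∧ l a c = l c a := by
  rw [Commute, SemiconjBy, hmul, hmul] at h
  obtain ⟨hac, hl⟩ := B.eq_of_smul_eq_smul (l a c).ne_zero h
  exact ⟨hac, Units.ext hl⟩

end TwistedGroupAlgebra

lemma exists_pow_eq_of_coprime_orderOf {G : Type*} [Group G] {n : ℕ} {c : G}
    (h : n.Coprime (orderOf c)) : ∃ b : G, b ^ n = c := by
  obtain ⟨k, hk⟩ := exists_pow_eq_self_of_coprime h
  exact ⟨c ^ k, by rwa [← pow_right_comm]⟩

theorem stmt_19_general {F : Type*} [Field F] {G : Type*} [Group G]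
    {A : Type*} [Ring A] [Algebra F A]
    (l : G → G → Fˣ) (B : Module.Basis G F A)
    (hone : B 1 = 1)
    (hmul : ∀ g h : G, B g * B h = ((l g h : F)) • B (g * h))
    (p : ℕ) [Fact p.Prime] [CharP F p]
    (m t : ℕ) (hLie : lowerLiePow A m = ⊥ ∨ upperLiePow A m = ⊥)
    (hmt : m ≤ p ^ t)
    (q : ℕ) (hq : q.Prime) (hqp : q ≠ p)
    (a c : G) (s' : ℕ) (hc : orderOf c = q ^ s') :
    a * c = c * a ∧ l a c = l c a := by
  have : Nontrivial A := nontrivial_of_ne (B a) 0 (B.ne_zero a)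
  have hcop : (p ^ t).Coprime (orderOf c) := by
    rw [hc]
    exact ((Nat.coprime_primes Fact.out hq).mpr hqp.symm).pow t s'
  obtain ⟨b, rfl⟩ := exists_pow_eq_of_coprime_orderOf hcop
  obtain ⟨u, hu⟩ := exists_basis_pow_eq_smul hone hmul b (p ^ t)
  have hcentral : Commute (B b ^ p ^ t) (B a) := commute_pow_char_pow_of_lieGamma_eq_bot F p
    (lieGamma_eq_bot_of_lowerLiePow_or_upperLiePow hLie) hmt _ _
  rw [hu] at hcentral
  exact mul_comm_and_eq_of_commute_basis hmul ((Commute.smul_left_iff₀ u.ne_zero).mp hcentral).symm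

/-- In an (upper or lower) Lie nilpotent twisted group algebra of
characteristic `p > 0` with `pᵗ ≥ m`, every `p`-element `a` commutes with every
`q`-element `c` (for a prime `q ≠ p`), and `λ(a,c) = λ(c,a)`. -/
theorem stmt_19 {F : Type*} [Field F] {G : Type*} [Group G]
    {A : Type*} [Ring A] [Algebra F A]
    (l : G → G → Fˣ) (B : Module.Basis G F A)
    (hone : B 1 = 1)
    (hmul : ∀ g h : G, B g * B h = ((l g h : F)) • B (g * h))
    (hcoc : ∀ a b c : G, l a (b * c) * l b c = l (a * b) c * l a b)
    (hnorm : ∀ g : G, l g 1 = 1 ∧ l 1 g = 1)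
    (p : ℕ) [Fact p.Prime] [CharP F p]
    (m t : ℕ) (hLie : lowerLiePow A m = ⊥ ∨ upperLiePow A m = ⊥)
    (hmt : m ≤ p ^ t)
    (q : ℕ) (hq : q.Prime) (hqp : q ≠ p)
    (a c : G) (s s' : ℕ) (ha : orderOf a = p ^ s) (hc : orderOf c = q ^ s') :
    a * c = c * a ∧ l a c = l c a :=
  stmt_19_general l B hone hmul p m t hLie hmt q hq hqp a c s' hc
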